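/- Let θ > 0, c ≥ 0, B > 0 and suppose Γ : ℝ → (0,∞) satisfies -Γ''(z) ≥ -2θ·Γ(z) for |z| > R, with Γ(z) ≥ δ > 0 for |z| = R and Γ bounded. Then Γ(z) ≥ δ·e^{-√(2θ)(|z|-R)} for all |z| ≥ R. -/

import Mathlib

/-!
With `μ = √(2θ)`, the functions `e^{±μ s}` solve `w'' = μ² w`, and a function with `h'' ≤ μ² h`
cannot have a negative interior minimum. On each half-line, `Γ` is compared with
`δ e^{-μ(s-R)} - ε e^{μ(s-t)}`: the growing term, however small `ε` is, makes the comparison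
function fall below `Γ ≥ 0` at some far point `Z`, so the minimum principle applies on `[R, Z]`.
Evaluating at `s = t` and letting `ε → 0` gives the bound.
-/

open Real Set Topology

theorem hasDerivAt_exp_mul_sub (a c t : ℝ) :
    HasDerivAt (fun s => exp (a * (s - c))) (a * exp (a * (t - c))) t := by
  simpa [mul_comm] using (((hasDerivAt_id t).sub_const c).const_mul a).exp

theorem deriv_exp_combination (A a c B b d : ℝ) :
    deriv (fun s => A * exp (a * (s - c)) + B * exp (b * (s - d)))
      = fun s => A * a * exp (a * (s - c)) + B * b * exp (b * (s - d)) := by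
  funext t
  simpa only [mul_assoc] using
    (((hasDerivAt_exp_mul_sub a c t).const_mul A).fun_add
      ((hasDerivAt_exp_mul_sub b d t).const_mul B)).deriv

theorem deriv_deriv_exp_combination (A B μ c d : ℝ) :
    deriv (deriv fun s => A * exp (-μ * (s - c)) + B * exp (μ * (s - d)))
      = fun s => μ ^ 2 * (A * exp (-μ * (s - c)) + B * exp (μ * (s - d))) := by
  rw [deriv_exp_combination, deriv_exp_combination]
  funext s; ring

theorem IsLocalMin.deriv_deriv_nonneg {f : ℝ → ℝ} {x : ℝ} (hmin : IsLocalMin f x)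
    (hcont : ContinuousAt f x) : 0 ≤ deriv (deriv f) x := by
  by_contra! hneg
  have hmax : IsLocalMax f x := isLocalMax_of_deriv_deriv_neg hneg hmin.deriv_eq_zero hcont
  have hconst : f =ᶠ[𝓝 x] fun _ => f x := by
    filter_upwards [hmin, hmax] with y hy₁ hy₂ using le_antisymm hy₂ hy₁
  have hzero : deriv (deriv f) x = 0 := by
    rw [hconst.deriv.deriv_eq, deriv_const', deriv_const]
  exact hneg.ne hzero

theorem nonneg_on_Icc_of_deriv_deriv_le_mul {h : ℝ → ℝ} {a b k : ℝ} (hk : 0 < k)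
    (hcont : ContinuousOn h (Icc a b)) (h'' : ∀ t ∈ Ioo a b, deriv (deriv h) t ≤ k * h t)
    (ha : 0 ≤ h a) (hb : 0 ≤ h b) : ∀ t ∈ Icc a b, 0 ≤ h t := by
  by_contra! ⟨t, ht, hneg⟩
  obtain ⟨z, hz, hzmin⟩ := isCompact_Icc.exists_isMinOn ⟨t, ht⟩ hcont
  have hhz : h z < 0 := (hzmin ht).trans_lt hneg
  have hza : a < z := hz.1.lt_of_ne (by rintro rfl; linarith)
  have hzb : z < b := hz.2.lt_of_ne (by rintro rfl; linarith)
  have hnhds : Icc a b ∈ 𝓝 z := Icc_mem_nhds hza hzb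
  have := (hzmin.isLocalMin hnhds).deriv_deriv_nonneg (hcont.continuousAt hnhds)
  nlinarith [h'' z ⟨hza, hzb⟩]

theorem deriv_deriv_add {f g : ℝ → ℝ} (hf : ContDiff ℝ 2 f) (hg : ContDiff ℝ 2 g) :
    deriv (deriv (f + g)) = deriv (deriv f) + deriv (deriv g) := by
  have hd : deriv (f + g) = deriv f + deriv g :=
    funext fun x => deriv_add (hf.differentiable two_ne_zero x) (hg.differentiable two_ne_zero x)
  rw [hd]
  exact funext fun x => deriv_add (hf.differentiable_deriv_two x) (hg.differentiable_deriv_two x)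

theorem mul_exp_neg_le_of_deriv_deriv_le {g : ℝ → ℝ} {μ R δ t : ℝ} (hμ : 0 < μ) (hδ : 0 ≤ δ)
    (hg : ContDiff ℝ 2 g) (hg_nonneg : ∀ s, R ≤ s → 0 ≤ g s)
    (hg'' : ∀ s, R < s → deriv (deriv g) s ≤ μ ^ 2 * g s) (hgR : δ ≤ g R) (ht : R ≤ t) :
    δ * exp (-μ * (t - R)) ≤ g t := by
  refine le_of_forall_pos_le_add fun ε hε => ?_
  set w : ℝ → ℝ := fun s => -δ * exp (-μ * (s - R)) + ε * exp (μ * (s - t)) with hw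
  have hw_smooth : ContDiff ℝ 2 w := by fun_prop
  set Z := t + δ / (ε * μ)
  have hZt : t ≤ Z := le_add_of_nonneg_right (by positivity)
  have hZ : δ ≤ ε * exp (μ * (Z - t)) := by
    have hexp : μ * (Z - t) = δ / ε := by simp only [Z, add_sub_cancel_left]; field_simp
    have := add_one_le_exp (μ * (Z - t))
    rw [hexp] at this ⊢
    rw [div_add_one hε.ne', div_le_iff₀ hε] at this
    linarith
  have key := nonneg_on_Icc_of_deriv_deriv_le_mul (h := g + w) (pow_pos hμ 2)
    (hg.continuous.add hw_smooth.continuous).continuousOn ?_ ?_ ?_ t ⟨ht, hZt⟩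
  · simp only [Pi.add_apply, hw, sub_self, mul_zero, exp_zero, mul_one] at key
    linarith
  · intro s hs
    rw [deriv_deriv_add hg hw_smooth, Pi.add_apply, hw, deriv_deriv_exp_combination]
    dsimp only [Pi.add_apply]
    linarith [hg'' s hs.1]
  · simp only [Pi.add_apply, hw, sub_self, mul_zero, exp_zero, mul_one]
    linarith [mul_pos hε (exp_pos (μ * (R - t)))]
  · have : exp (-μ * (Z - R)) ≤ 1 := exp_le_one_iff.mpr (by nlinarith)
    simp only [Pi.add_apply, hw]
    nlinarith [hg_nonneg Z (ht.trans hZt)]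

theorem deriv_deriv_comp_neg (f : ℝ → ℝ) (x : ℝ) :
    deriv (deriv fun t => f (-t)) x = deriv (deriv f) (-x) := by
  have hd : deriv (fun t => f (-t)) = fun t => -deriv f (-t) := funext (deriv_comp_neg f)
  rw [hd, deriv.fun_neg, deriv_comp_neg, neg_neg]

theorem stmt14_general (θ R δ : ℝ) (hθ : 0 < θ)
    (hR : 0 < R) (hδ : 0 < δ)
    (Γ : ℝ → ℝ) (hC2 : ContDiff ℝ 2 Γ)
    (hpos : ∀ z : ℝ, 0 < Γ z)
    (hsuper : ∀ z : ℝ, R < |z| → -(deriv (deriv Γ) z) ≥ -(2*θ) * Γ z)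
    (hbdry : ∀ z : ℝ, |z| = R → δ ≤ Γ z) :
    ∀ z : ℝ, R ≤ |z| → δ * Real.exp (-Real.sqrt (2*θ) * (|z| - R)) ≤ Γ z := by
  intro z hz
  set μ := √(2 * θ)
  have hμ : 0 < μ := sqrt_pos.mpr (by linarith)
  have hμsq : μ ^ 2 = 2 * θ := sq_sqrt (by linarith)
  have hR_abs : |R| = R := abs_of_pos hR
  rcases le_total 0 z with hz0 | hz0
  · rw [abs_of_nonneg hz0] at hz ⊢
    refine mul_exp_neg_le_of_deriv_deriv_le hμ hδ.le hC2 (fun s _ => (hpos s).le)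
      (fun s hs => ?_) (hbdry R hR_abs) hz
    have := hsuper s (by rwa [abs_of_pos (hR.trans hs)])
    rw [hμsq]
    linarith
  · rw [abs_of_nonpos hz0] at hz ⊢
    have hΓ''_neg : ∀ s, R < s → deriv (deriv fun t => Γ (-t)) s ≤ μ ^ 2 * Γ (-s) := by
      intro s hs
      have := hsuper (-s) (by rwa [abs_neg, abs_of_pos (hR.trans hs)])
      rw [deriv_deriv_comp_neg, hμsq]
      linarith
    simpa only [neg_neg] using mul_exp_neg_le_of_deriv_deriv_le (g := fun t => Γ (-t)) hμ hδ.le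
      (hC2.comp contDiff_neg) (fun s _ => (hpos _).le) hΓ''_neg
      (hbdry (-R) (by rw [abs_neg, hR_abs])) hz

/-- One-dimensional lower bound on the tails of the modified eigenfunction: if a
positive bounded `C²` function `Γ` satisfies `-Γ'' ≥ -2θΓ` for `|z| > R` and
`Γ ≥ δ` on `|z| = R`, then `Γ(z) ≥ δ e^{-√(2θ)(|z|-R)}` for `|z| ≥ R`. -/
theorem stmt14 (θ c B R δ : ℝ) (hθ : 0 < θ) (hc : 0 ≤ c) (hB : 0 < B)
    (hR : 0 < R) (hδ : 0 < δ)
    (Γ : ℝ → ℝ) (hC2 : ContDiff ℝ 2 Γ)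
    (hpos : ∀ z : ℝ, 0 < Γ z)
    (hbd : ∃ U : ℝ, ∀ z : ℝ, Γ z ≤ U)
    (hsuper : ∀ z : ℝ, R < |z| → -(deriv (deriv Γ) z) ≥ -(2*θ) * Γ z)
    (hbdry : ∀ z : ℝ, |z| = R → δ ≤ Γ z) :
    ∀ z : ℝ, R ≤ |z| → δ * Real.exp (-Real.sqrt (2*θ) * (|z| - R)) ≤ Γ z :=
  stmt14_general θ R δ hθ hR hδ Γ hC2 hpos hsuper hbdry
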